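/- Uniqueness for the ∂̄-intertwining equation (unique continuation): let a, b : ℂ → ℂ^{r×r} be smooth and compactly supported, and let u : ℂ → ℂ^{r×r} be smooth with ∂̄u + au − ub = 0 on all of ℂ. If u vanishes outside some compact subset of ℂ, then u ≡ 0 on ℂ. In particular, two smooth solutions of ∂̄G + aG − Gb = 0 that agree outside a compact set agree everywhere. -/

import Mathlib

open Matrix

attribute [local instance] Matrix.normedAddCommGroup Matrix.normedSpace

noncomputable section

/-- The Wirtinger derivative `∂̄u(z) = ½(∂ₓu(z) + i ∂_y u(z))`. -/
def dbar {E : Type*} [NormedAddCommGroup E] [NormedSpace ℂ E]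
    (u : ℂ → E) (z : ℂ) : E :=
  (2 : ℂ)⁻¹ • (fderiv ℝ u z 1 + Complex.I • fderiv ℝ u z Complex.I)

open MeasureTheory Complex


lemma integral_deriv_zero (f : ℝ → ℂ) (hf : ContDiff ℝ 1 f) (h2 : HasCompactSupport f) :
    ∫ x : ℝ, deriv f x = 0 := by
  have hd : Continuous (deriv f) := (hf.iterate_deriv' 0 1).continuous
  have hint : Integrable (deriv f) := (hd.integrable_of_hasCompactSupport h2.deriv)
  rw [← intervalIntegral.integral_Iic_add_Ioi (hint.integrableOn) (hint.integrableOn),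
    h2.integral_Iic_deriv_eq hf 0, h2.integral_Ioi_deriv_eq hf 0]
  ring

lemma comp_line_hcs (G : ℂ → ℂ) (h2 : HasCompactSupport G) (y : ℝ) :
    HasCompactSupport fun x : ℝ => G ((x : ℂ) + y * I) := by
  obtain ⟨R, hR⟩ := h2.isCompact.isBounded.subset_closedBall 0
  apply HasCompactSupport.intro (isCompact_closedBall (0:ℝ) R)
  intro x hx
  apply image_eq_zero_of_notMem_tsupport
  intro hmem
  apply hx
  have := hR hmem
  simp only [Metric.mem_closedBall, dist_zero_right] at this ⊢
  calc |x| = |((x:ℂ) + y*I).re| := by simp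
    _ ≤ ‖(x:ℂ) + y*I‖ := Complex.abs_re_le_norm _
    _ ≤ R := this

lemma comp_line_hcs' (G : ℂ → ℂ) (h2 : HasCompactSupport G) (x : ℝ) :
    HasCompactSupport fun y : ℝ => G ((x : ℂ) + y * I) := by
  obtain ⟨R, hR⟩ := h2.isCompact.isBounded.subset_closedBall 0
  apply HasCompactSupport.intro (isCompact_closedBall (0:ℝ) R)
  intro y hy
  apply image_eq_zero_of_notMem_tsupport
  intro hmem
  apply hy
  have := hR hmem
  simp only [Metric.mem_closedBall, dist_zero_right] at this ⊢
  calc |y| = |((x:ℂ) + y*I).im| := by simp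
    _ ≤ ‖(x:ℂ) + y*I‖ := Complex.abs_im_le_norm _
    _ ≤ R := this

lemma line_contDiff (y : ℝ) : ContDiff ℝ 1 (fun x : ℝ => (x : ℂ) + y * I) :=
  Complex.ofRealCLM.contDiff.add contDiff_const

lemma line_contDiff' (x : ℝ) : ContDiff ℝ 1 (fun y : ℝ => (x : ℂ) + y * I) := by
  have : (fun y : ℝ => (x : ℂ) + y * I) = fun y : ℝ => (x:ℂ) + (y:ℂ) * I := rfl
  exact contDiff_const.add (Complex.ofRealCLM.contDiff.mul contDiff_const)

lemma hasDerivAt_line (G : ℂ → ℂ) (hG : ContDiff ℝ 1 G) (x y : ℝ) :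
    HasDerivAt (fun x : ℝ => G ((x : ℂ) + y * I)) (fderiv ℝ G ((x:ℂ) + y*I) 1) x := by
  have h1 : HasDerivAt (fun x : ℝ => (x : ℂ) + y * I) 1 x := by
    simpa using (Complex.ofRealCLM.hasDerivAt (x := x)).add_const ((y:ℂ) * I)
  have h2 : HasFDerivAt G (fderiv ℝ G ((x:ℂ)+y*I)) ((x:ℂ)+y*I) :=
    (hG.differentiable one_ne_zero _).hasFDerivAt
  exact (h2.comp_hasDerivAt x h1)

lemma hasDerivAt_line' (G : ℂ → ℂ) (hG : ContDiff ℝ 1 G) (x y : ℝ) :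
    HasDerivAt (fun y : ℝ => G ((x : ℂ) + y * I)) (fderiv ℝ G ((x:ℂ) + y*I) I) y := by
  have h1 : HasDerivAt (fun y : ℝ => (x : ℂ) + y * I) I y := by
    have := ((Complex.ofRealCLM.hasDerivAt (x := y)).mul_const I).const_add (x:ℂ)
    simpa using this
  have h2 : HasFDerivAt G (fderiv ℝ G ((x:ℂ)+y*I)) ((x:ℂ)+y*I) :=
    (hG.differentiable one_ne_zero _).hasFDerivAt
  exact (h2.comp_hasDerivAt y h1)

lemma integral_fderiv_one (G : ℂ → ℂ) (hG : ContDiff ℝ 1 G) (h2 : HasCompactSupport G) :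
    ∫ z : ℂ, fderiv ℝ G z 1 = 0 := by
  have hFc : Continuous fun z => fderiv ℝ G z 1 :=
    ((hG.continuous_fderiv one_ne_zero).clm_apply continuous_const)
  have hFs : HasCompactSupport fun z => fderiv ℝ G z 1 := h2.fderiv_apply ℝ 1
  have hFi : Integrable (fun z => fderiv ℝ G z 1) :=
    hFc.integrable_of_hasCompactSupport hFs
  have hmp := Complex.volume_preserving_equiv_real_prod.symm
  rw [← hmp.integral_comp (Complex.measurableEquivRealProd.symm.measurableEmbedding) _]
  have hiprod : Integrable (fun p : ℝ × ℝ => fderiv ℝ G (Complex.measurableEquivRealProd.symm p) 1) := by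
    exact (hmp.integrable_comp_emb (Complex.measurableEquivRealProd.symm.measurableEmbedding)).2 hFi
  rw [MeasureTheory.Measure.volume_eq_prod, MeasureTheory.integral_prod_symm _ hiprod]
  have : ∀ y : ℝ, (∫ x : ℝ, fderiv ℝ G (Complex.measurableEquivRealProd.symm (x, y)) 1) = 0 := by
    intro y
    have key : ∀ x : ℝ, fderiv ℝ G (Complex.measurableEquivRealProd.symm (x, y)) 1
        = deriv (fun x : ℝ => G ((x:ℂ) + y * I)) x := by
      intro x
      have hz : (Complex.measurableEquivRealProd.symm (x,y) : ℂ) = (x:ℂ) + y * I := by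
        rw [Complex.measurableEquivRealProd_symm_apply]; exact Complex.mk_eq_add_mul_I x y
      rw [hz, (hasDerivAt_line G hG x y).deriv]
    simp_rw [key]
    exact integral_deriv_zero _ (hG.comp (line_contDiff y)) (comp_line_hcs G h2 y)
  calc (∫ y : ℝ, ∫ x : ℝ, fderiv ℝ G (Complex.measurableEquivRealProd.symm (x, y)) 1)
      = ∫ _ : ℝ, (0:ℂ) := by exact integral_congr_ae (Filter.Eventually.of_forall this)
    _ = 0 := integral_zero _ _

lemma integral_fderiv_I (G : ℂ → ℂ) (hG : ContDiff ℝ 1 G) (h2 : HasCompactSupport G) :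
    ∫ z : ℂ, fderiv ℝ G z I = 0 := by
  have hFc : Continuous fun z => fderiv ℝ G z I :=
    ((hG.continuous_fderiv one_ne_zero).clm_apply continuous_const)
  have hFs : HasCompactSupport fun z => fderiv ℝ G z I := h2.fderiv_apply ℝ I
  have hFi : Integrable (fun z => fderiv ℝ G z I) :=
    hFc.integrable_of_hasCompactSupport hFs
  have hmp := Complex.volume_preserving_equiv_real_prod.symm
  rw [← hmp.integral_comp (Complex.measurableEquivRealProd.symm.measurableEmbedding) _]
  have hiprod : Integrable (fun p : ℝ × ℝ => fderiv ℝ G (Complex.measurableEquivRealProd.symm p) I) := by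
    exact (hmp.integrable_comp_emb (Complex.measurableEquivRealProd.symm.measurableEmbedding)).2 hFi
  rw [MeasureTheory.Measure.volume_eq_prod, MeasureTheory.integral_prod _ hiprod]
  have : ∀ x : ℝ, (∫ y : ℝ, fderiv ℝ G (Complex.measurableEquivRealProd.symm (x, y)) I) = 0 := by
    intro x
    have key : ∀ y : ℝ, fderiv ℝ G (Complex.measurableEquivRealProd.symm (x, y)) I
        = deriv (fun y : ℝ => G ((x:ℂ) + y * I)) y := by
      intro y
      have hz : (Complex.measurableEquivRealProd.symm (x,y) : ℂ) = (x:ℂ) + y * I := by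
        rw [Complex.measurableEquivRealProd_symm_apply]; exact Complex.mk_eq_add_mul_I x y
      rw [hz, (hasDerivAt_line' G hG x y).deriv]
    simp_rw [key]
    exact integral_deriv_zero _ (hG.comp (line_contDiff' x)) (comp_line_hcs' G h2 x)
  calc (∫ x : ℝ, ∫ y : ℝ, fderiv ℝ G (Complex.measurableEquivRealProd.symm (x, y)) I)
      = ∫ _ : ℝ, (0:ℂ) := by exact integral_congr_ae (Filter.Eventually.of_forall this)
    _ = 0 := integral_zero _ _



lemma fderiv_mul_apply {f g : ℂ → ℂ} {z v : ℂ} (hf : DifferentiableAt ℝ f z)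
    (hg : DifferentiableAt ℝ g z) :
    fderiv ℝ (fun w => f w * g w) z v = fderiv ℝ f z v * g z + f z * fderiv ℝ g z v := by
  rw [fderiv_fun_mul hf hg]; simp; ring

lemma fderiv_conj_apply {f : ℂ → ℂ} {z v : ℂ} (hf : DifferentiableAt ℝ f z) :
    fderiv ℝ (fun w => (starRingEnd ℂ) (f w)) z v = (starRingEnd ℂ) (fderiv ℝ f z v) := by
  have h := (Complex.conjCLE.toContinuousLinearMap.hasFDerivAt (x := f z)).comp z hf.hasFDerivAt
  have h2 : (fun w => (starRingEnd ℂ) (f w)) = (Complex.conjCLE.toContinuousLinearMap ∘ f) := rfl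
  rw [h2, h.fderiv]; rfl

lemma fderiv_re_apply (z v : ℂ) :
    fderiv ℝ (fun z : ℂ => (z.re : ℂ)) z v = (v.re : ℂ) := by
  have : (fun z : ℂ => (z.re : ℂ)) = (Complex.ofRealCLM.comp Complex.reCLM : ℂ →L[ℝ] ℂ) := rfl
  rw [this, ContinuousLinearMap.fderiv]; rfl

lemma contDiff_fderiv_apply {f : ℂ → ℂ} (hf : ContDiff ℝ (⊤ : ℕ∞) f) (v : ℂ) :
    ContDiff ℝ (⊤ : ℕ∞) (fun z => fderiv ℝ f z v) := by
  exact (hf.fderiv_right (by simp)).clm_apply contDiff_const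

lemma second_symm {f : ℂ → ℂ} (hf : ContDiff ℝ (⊤ : ℕ∞) f) (z : ℂ) :
    fderiv ℝ (fun w => fderiv ℝ f w Complex.I) z 1
      = fderiv ℝ (fun w => fderiv ℝ f w 1) z Complex.I := by
  have hg : Differentiable ℝ (fderiv ℝ f) := (hf.fderiv_right (m := 1) (WithTop.coe_le_coe.mpr le_top)).differentiable one_ne_zero
  have e1 : ∀ v w : ℂ, fderiv ℝ (fun x => fderiv ℝ f x v) z w
      = fderiv ℝ (fderiv ℝ f) z w v := by
    intro v w
    have h := ((ContinuousLinearMap.apply ℝ ℂ v).hasFDerivAt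
      (x := fderiv ℝ f z)).comp z (hg z).hasFDerivAt
    have h2 : (fun x => fderiv ℝ f x v) = ((ContinuousLinearMap.apply ℝ ℂ v) ∘ fderiv ℝ f) := rfl
    rw [h2, h.fderiv]; rfl
  rw [e1, e1]
  exact (hf.contDiffAt.isSymmSndFDerivAt (by rw [minSmoothness_of_isRCLikeNormedField]; exact WithTop.coe_le_coe.mpr le_top)).eq 1 Complex.I

lemma hcs_sub {f g : ℂ → ℂ} (hf : HasCompactSupport f) (hg : HasCompactSupport g) :
    HasCompactSupport fun z => f z - g z := by
  have h := hf.add hg.neg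
  exact hf.sub hg

lemma cross_alg (a d w : ℂ) (c : ℝ) :
    2*((((2:ℂ)⁻¹ * a)) * (starRingEnd ℂ) ((2:ℂ)⁻¹ * Complex.I * d - (c:ℂ) * w)).re
      = (1/2) * (a * (starRingEnd ℂ) d).im - c * (a * (starRingEnd ℂ) w).re := by
  simp only [map_sub, _root_.map_mul, Complex.conj_I, Complex.conj_ofReal, map_inv₀, map_ofNat,
    Complex.mul_re, Complex.mul_im, Complex.sub_re, Complex.sub_im, Complex.I_re, Complex.I_im,
    Complex.conj_re, Complex.conj_im, Complex.inv_re, Complex.inv_im, Complex.ofReal_re,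
    Complex.ofReal_im, Complex.normSq_ofNat, Complex.re_ofNat, Complex.im_ofNat,
    Complex.neg_re, Complex.neg_im]
  ring

lemma conj_comp_contDiff {g : ℂ → ℂ} (hg : ContDiff ℝ (⊤ : ℕ∞) g) :
    ContDiff ℝ (⊤ : ℕ∞) (fun z => (starRingEnd ℂ) (g z)) := by
  have : (fun z => (starRingEnd ℂ) (g z)) = (⇑Complex.conjCLE.toContinuousLinearMap ∘ g) := rfl
  rw [this]
  exact Complex.conjCLE.toContinuousLinearMap.contDiff.comp hg

lemma J1 (f : ℂ → ℂ) (hf : ContDiff ℝ (⊤ : ℕ∞) f) (h2 : HasCompactSupport f) :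
    ∫ z : ℂ, (fderiv ℝ f z 1 * (starRingEnd ℂ) (fderiv ℝ f z Complex.I)).im = 0 := by
  set Fx : ℂ → ℂ := fun z => fderiv ℝ f z 1 with hFxdef
  set Fy : ℂ → ℂ := fun z => fderiv ℝ f z Complex.I with hFydef
  have hFx_cd : ContDiff ℝ (⊤ : ℕ∞) Fx := contDiff_fderiv_apply hf 1
  have hFy_cd : ContDiff ℝ (⊤ : ℕ∞) Fy := contDiff_fderiv_apply hf Complex.I
  have hfd : Differentiable ℝ f := hf.differentiable (by simp)
  set G1 : ℂ → ℂ := fun z => f z * (starRingEnd ℂ) (Fy z) with hG1def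
  set G2 : ℂ → ℂ := fun z => f z * (starRingEnd ℂ) (Fx z) with hG2def
  have hG1 : ContDiff ℝ (⊤ : ℕ∞) G1 := hf.mul (conj_comp_contDiff hFy_cd)
  have hG2 : ContDiff ℝ (⊤ : ℕ∞) G2 := hf.mul (conj_comp_contDiff hFx_cd)
  have sG1 : HasCompactSupport G1 := h2.mul_right
  have sG2 : HasCompactSupport G2 := h2.mul_right
  have key : ∀ z : ℂ, fderiv ℝ G1 z 1 - fderiv ℝ G2 z Complex.I
      = ((2 * (Fx z * (starRingEnd ℂ) (Fy z)).im : ℝ) : ℂ) * Complex.I := by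
    intro z
    have e1 : fderiv ℝ G1 z 1 = Fx z * (starRingEnd ℂ) (Fy z)
        + f z * (starRingEnd ℂ) (fderiv ℝ Fy z 1) := by
      rw [hG1def, fderiv_mul_apply (hfd z) (((conj_comp_contDiff hFy_cd).differentiable (by simp)) z),
        fderiv_conj_apply ((hFy_cd.differentiable (by simp)) z)]
    have e2 : fderiv ℝ G2 z Complex.I = Fy z * (starRingEnd ℂ) (Fx z)
        + f z * (starRingEnd ℂ) (fderiv ℝ Fx z Complex.I) := by
      rw [hG2def, fderiv_mul_apply (hfd z) (((conj_comp_contDiff hFx_cd).differentiable (by simp)) z),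
        fderiv_conj_apply ((hFx_cd.differentiable (by simp)) z)]
    have hsw : Fy z * (starRingEnd ℂ) (Fx z)
        = (starRingEnd ℂ) (Fx z * (starRingEnd ℂ) (Fy z)) := by
      rw [_root_.map_mul, Complex.conj_conj]; ring
    rw [e1, e2, second_symm hf z, hsw]
    linear_combination Complex.sub_conj (Fx z * (starRingEnd ℂ) (Fy z))
  have int1 : Integrable (fun z : ℂ => fderiv ℝ G1 z 1) :=
    (contDiff_fderiv_apply hG1 1).continuous.integrable_of_hasCompactSupport (sG1.fderiv_apply ℝ 1)
  have int2 : Integrable (fun z : ℂ => fderiv ℝ G2 z Complex.I) :=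
    (contDiff_fderiv_apply hG2 Complex.I).continuous.integrable_of_hasCompactSupport
      (sG2.fderiv_apply ℝ Complex.I)
  have hsub : ∫ z : ℂ, (fderiv ℝ G1 z 1 - fderiv ℝ G2 z Complex.I) = 0 := by
    rw [integral_sub int1 int2, integral_fderiv_one G1 (hG1.of_le (by simp)) sG1,
      integral_fderiv_I G2 (hG2.of_le (by simp)) sG2, sub_zero]
  simp_rw [key] at hsub
  rw [integral_mul_const] at hsub
  rcases mul_eq_zero.mp hsub with h | h
  · rw [show (∫ a : ℂ, ((2 * (Fx a * (starRingEnd ℂ) (Fy a)).im : ℝ) : ℂ))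
        = ((∫ a : ℂ, 2 * (Fx a * (starRingEnd ℂ) (Fy a)).im : ℝ) : ℂ) from integral_ofReal,
      Complex.ofReal_eq_zero, MeasureTheory.integral_const_mul] at h
    linarith
  · exact absurd h Complex.I_ne_zero

lemma J2 (f : ℂ → ℂ) (hf : ContDiff ℝ (⊤ : ℕ∞) f) (h2 : HasCompactSupport f) :
    ∫ z : ℂ, z.re * (fderiv ℝ f z 1 * (starRingEnd ℂ) (f z)).re
      = -(1/2) * ∫ z : ℂ, normSq (f z) := by
  set Fx : ℂ → ℂ := fun z => fderiv ℝ f z 1 with hFxdef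
  have hFx_cd : ContDiff ℝ (⊤ : ℕ∞) Fx := contDiff_fderiv_apply hf 1
  have hfd : Differentiable ℝ f := hf.differentiable (by simp)
  have hre_cd : ContDiff ℝ (⊤ : ℕ∞) (fun z : ℂ => (z.re : ℂ)) := by
    have : (fun z : ℂ => (z.re : ℂ)) = ⇑(Complex.ofRealCLM.comp Complex.reCLM) := rfl
    rw [this]; exact (Complex.ofRealCLM.comp Complex.reCLM).contDiff
  set G3 : ℂ → ℂ := fun z => (z.re : ℂ) * (f z * (starRingEnd ℂ) (f z)) with hG3def
  have hff_cd : ContDiff ℝ (⊤ : ℕ∞) (fun z => f z * (starRingEnd ℂ) (f z)) :=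
    hf.mul (conj_comp_contDiff hf)
  have hG3 : ContDiff ℝ (⊤ : ℕ∞) G3 := hre_cd.mul hff_cd
  have sG3 : HasCompactSupport G3 := (h2.mul_right).mul_left
  have key : ∀ z : ℂ, fderiv ℝ G3 z 1
      = ((normSq (f z) + z.re * (2 * (Fx z * (starRingEnd ℂ) (f z)).re) : ℝ) : ℂ) := by
    intro z
    rw [hG3def, fderiv_mul_apply ((hre_cd.differentiable (by simp)) z)
        ((hff_cd.differentiable (by simp)) z),
      fderiv_re_apply, fderiv_mul_apply (hfd z) (((conj_comp_contDiff hf).differentiable (by simp)) z),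
      fderiv_conj_apply (hfd z)]
    have hsw : f z * (starRingEnd ℂ) (Fx z)
        = (starRingEnd ℂ) (Fx z * (starRingEnd ℂ) (f z)) := by
      rw [_root_.map_mul, Complex.conj_conj]; ring
    rw [hsw]
    have h1 : Fx z * (starRingEnd ℂ) (f z) + (starRingEnd ℂ) (Fx z * (starRingEnd ℂ) (f z))
        = ((2 * (Fx z * (starRingEnd ℂ) (f z)).re : ℝ) : ℂ) := by
      rw [Complex.add_conj]
    rw [Complex.mul_conj, h1]
    push_cast [Complex.one_re]
    ring
  have h0 : ∫ z : ℂ, fderiv ℝ G3 z 1 = 0 := integral_fderiv_one G3 (hG3.of_le (by simp)) sG3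
  simp_rw [key] at h0
  rw [show (∫ z : ℂ, ((normSq (f z) + z.re * (2 * (Fx z * (starRingEnd ℂ) (f z)).re) : ℝ) : ℂ))
      = ((∫ z : ℂ, (normSq (f z) + z.re * (2 * (Fx z * (starRingEnd ℂ) (f z)).re)) : ℝ) : ℂ)
      from integral_ofReal, Complex.ofReal_eq_zero] at h0
  have i1 : Integrable (fun z : ℂ => normSq (f z)) :=
    (Complex.continuous_normSq.comp (hf.continuous)).integrable_of_hasCompactSupport
      (h2.comp_left (by simp))
  have hw_cs : HasCompactSupport (fun z : ℂ => Fx z * (starRingEnd ℂ) (f z)) :=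
    HasCompactSupport.mul_left (h2.comp_left (map_zero _))
  have i2 : Integrable (fun z : ℂ => z.re * (2 * (Fx z * (starRingEnd ℂ) (f z)).re)) := by
    have hc : Continuous (fun z : ℂ => z.re * (2 * (Fx z * (starRingEnd ℂ) (f z)).re)) := by
      apply Complex.continuous_re.mul
      exact (continuous_const.mul (Complex.continuous_re.comp
        ((hFx_cd.continuous).mul (Complex.conjCLE.continuous.comp hf.continuous))))
    apply hc.integrable_of_hasCompactSupport
    exact ((hw_cs.comp_left (g := Complex.re) rfl).mul_left (f := fun z : ℂ => (2:ℝ))).mul_left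
  rw [integral_add i1 i2] at h0
  have e2 : ∫ z : ℂ, z.re * (2 * (Fx z * (starRingEnd ℂ) (f z)).re)
      = 2 * ∫ z : ℂ, z.re * ((Fx z * (starRingEnd ℂ) (f z)).re) := by
    rw [← MeasureTheory.integral_const_mul]
    congr 1; funext z; ring
  rw [e2] at h0
  linarith

lemma carleman (τ : ℝ) (f : ℂ → ℂ) (hf : ContDiff ℝ (⊤ : ℕ∞) f) (h2 : HasCompactSupport f) :
    (τ/2) * ∫ z : ℂ, normSq (f z)
      ≤ ∫ z : ℂ, normSq (dbar f z - ((τ * z.re : ℝ) : ℂ) * f z) := by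
  have hFx_cd : ContDiff ℝ (⊤ : ℕ∞) (fun z => fderiv ℝ f z 1) := contDiff_fderiv_apply hf 1
  have hFy_cd : ContDiff ℝ (⊤ : ℕ∞) (fun z => fderiv ℝ f z Complex.I) :=
    contDiff_fderiv_apply hf Complex.I
  have hA_c : Continuous (fun z : ℂ => (2:ℂ)⁻¹ * fderiv ℝ f z 1) :=
    continuous_const.mul hFx_cd.continuous
  have hτre : Continuous (fun z : ℂ => ((τ * z.re : ℝ) : ℂ)) :=
    Complex.continuous_ofReal.comp (continuous_const.mul Complex.continuous_re)
  have hD_c : Continuous (fun z : ℂ =>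
      (2:ℂ)⁻¹ * Complex.I * fderiv ℝ f z Complex.I - ((τ * z.re : ℝ) : ℂ) * f z) :=
    (continuous_const.mul hFy_cd.continuous).sub (hτre.mul hf.continuous)
  have sFx : HasCompactSupport (fun z : ℂ => fderiv ℝ f z 1) := h2.fderiv_apply ℝ 1
  have sFy : HasCompactSupport (fun z : ℂ => fderiv ℝ f z Complex.I) :=
    h2.fderiv_apply ℝ Complex.I
  have sA : HasCompactSupport (fun z : ℂ => (2:ℂ)⁻¹ * fderiv ℝ f z 1) := sFx.mul_left
  have sD : HasCompactSupport (fun z : ℂ =>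
      (2:ℂ)⁻¹ * Complex.I * fderiv ℝ f z Complex.I - ((τ * z.re : ℝ) : ℂ) * f z) :=
    hcs_sub (sFy.mul_left) (h2.mul_left)
  have iA : Integrable (fun z : ℂ => normSq ((2:ℂ)⁻¹ * fderiv ℝ f z 1)) :=
    (Complex.continuous_normSq.comp hA_c).integrable_of_hasCompactSupport
      (sA.comp_left (by simp))
  have iD : Integrable (fun z : ℂ => normSq
      ((2:ℂ)⁻¹ * Complex.I * fderiv ℝ f z Complex.I - ((τ * z.re : ℝ) : ℂ) * f z)) :=
    (Complex.continuous_normSq.comp hD_c).integrable_of_hasCompactSupport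
      (sD.comp_left (by simp))
  have hADcs : HasCompactSupport (fun z : ℂ => ((2:ℂ)⁻¹ * fderiv ℝ f z 1) * (starRingEnd ℂ)
      ((2:ℂ)⁻¹ * Complex.I * fderiv ℝ f z Complex.I - ((τ * z.re : ℝ) : ℂ) * f z)) :=
    sA.mul_right
  have iC : Integrable (fun z : ℂ => 2 * (((2:ℂ)⁻¹ * fderiv ℝ f z 1) * (starRingEnd ℂ)
      ((2:ℂ)⁻¹ * Complex.I * fderiv ℝ f z Complex.I - ((τ * z.re : ℝ) : ℂ) * f z)).re) := by
    have hc : Continuous (fun z : ℂ => 2 * (((2:ℂ)⁻¹ * fderiv ℝ f z 1) * (starRingEnd ℂ)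
        ((2:ℂ)⁻¹ * Complex.I * fderiv ℝ f z Complex.I - ((τ * z.re : ℝ) : ℂ) * f z)).re) :=
      continuous_const.mul (Complex.continuous_re.comp
        (hA_c.mul (Complex.conjCLE.continuous.comp hD_c)))
    exact hc.integrable_of_hasCompactSupport
      ((hADcs.comp_left (g := Complex.re) rfl).mul_left)
  have hps : ∀ z : ℂ, normSq (dbar f z - ((τ * z.re : ℝ) : ℂ) * f z)
      = normSq ((2:ℂ)⁻¹ * fderiv ℝ f z 1)
        + normSq ((2:ℂ)⁻¹ * Complex.I * fderiv ℝ f z Complex.I - ((τ * z.re : ℝ) : ℂ) * f z)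
        + 2 * (((2:ℂ)⁻¹ * fderiv ℝ f z 1) * (starRingEnd ℂ)
          ((2:ℂ)⁻¹ * Complex.I * fderiv ℝ f z Complex.I - ((τ * z.re : ℝ) : ℂ) * f z)).re := by
    intro z
    have hsum : dbar f z - ((τ * z.re : ℝ) : ℂ) * f z
        = ((2:ℂ)⁻¹ * fderiv ℝ f z 1)
          + ((2:ℂ)⁻¹ * Complex.I * fderiv ℝ f z Complex.I - ((τ * z.re : ℝ) : ℂ) * f z) := by
      simp only [dbar, smul_eq_mul]; ring
    rw [hsum]; exact Complex.normSq_add _ _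
  have hcross_pt : ∀ z : ℂ, 2 * (((2:ℂ)⁻¹ * fderiv ℝ f z 1) * (starRingEnd ℂ)
        ((2:ℂ)⁻¹ * Complex.I * fderiv ℝ f z Complex.I - ((τ * z.re : ℝ) : ℂ) * f z)).re
      = (1/2) * (fderiv ℝ f z 1 * (starRingEnd ℂ) (fderiv ℝ f z Complex.I)).im
        - τ * (z.re * (fderiv ℝ f z 1 * (starRingEnd ℂ) (f z)).re) := by
    intro z
    have h := cross_alg (fderiv ℝ f z 1) (fderiv ℝ f z Complex.I) (f z) (τ * z.re)
    rw [h]; ring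
  have i_im : Integrable (fun z : ℂ =>
      (1/2) * (fderiv ℝ f z 1 * (starRingEnd ℂ) (fderiv ℝ f z Complex.I)).im) := by
    have hc : Continuous (fun z : ℂ =>
        (1/2) * (fderiv ℝ f z 1 * (starRingEnd ℂ) (fderiv ℝ f z Complex.I)).im) :=
      continuous_const.mul (Complex.continuous_im.comp
        (hFx_cd.continuous.mul (Complex.conjCLE.continuous.comp hFy_cd.continuous)))
    exact hc.integrable_of_hasCompactSupport
      (((sFx.mul_right.comp_left (g := Complex.im) rfl)).mul_left)
  have i_xre : Integrable (fun z : ℂ =>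
      τ * (z.re * (fderiv ℝ f z 1 * (starRingEnd ℂ) (f z)).re)) := by
    have hc : Continuous (fun z : ℂ =>
        τ * (z.re * (fderiv ℝ f z 1 * (starRingEnd ℂ) (f z)).re)) :=
      continuous_const.mul (Complex.continuous_re.mul (Complex.continuous_re.comp
        (hFx_cd.continuous.mul (Complex.conjCLE.continuous.comp hf.continuous))))
    exact hc.integrable_of_hasCompactSupport
      ((((sFx.mul_right.comp_left (g := Complex.re) rfl)).mul_left).mul_left)
  have hcrossval : ∫ z : ℂ, 2 * (((2:ℂ)⁻¹ * fderiv ℝ f z 1) * (starRingEnd ℂ)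
        ((2:ℂ)⁻¹ * Complex.I * fderiv ℝ f z Complex.I - ((τ * z.re : ℝ) : ℂ) * f z)).re
      = (τ/2) * ∫ z : ℂ, normSq (f z) := by
    simp_rw [hcross_pt]
    rw [integral_sub i_im i_xre, MeasureTheory.integral_const_mul,
      MeasureTheory.integral_const_mul, J1 f hf h2, J2 f hf h2]
    ring
  have htot : ∫ z : ℂ, normSq (dbar f z - ((τ * z.re : ℝ) : ℂ) * f z)
      = (∫ z : ℂ, normSq ((2:ℂ)⁻¹ * fderiv ℝ f z 1))
        + (∫ z : ℂ, normSq ((2:ℂ)⁻¹ * Complex.I * fderiv ℝ f z Complex.I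
            - ((τ * z.re : ℝ) : ℂ) * f z))
        + ∫ z : ℂ, 2 * (((2:ℂ)⁻¹ * fderiv ℝ f z 1) * (starRingEnd ℂ)
          ((2:ℂ)⁻¹ * Complex.I * fderiv ℝ f z Complex.I - ((τ * z.re : ℝ) : ℂ) * f z)).re := by
    calc ∫ z : ℂ, normSq (dbar f z - ((τ * z.re : ℝ) : ℂ) * f z)
        = ∫ z : ℂ, (normSq ((2:ℂ)⁻¹ * fderiv ℝ f z 1)
          + normSq ((2:ℂ)⁻¹ * Complex.I * fderiv ℝ f z Complex.I - ((τ * z.re : ℝ) : ℂ) * f z))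
          + 2 * (((2:ℂ)⁻¹ * fderiv ℝ f z 1) * (starRingEnd ℂ)
          ((2:ℂ)⁻¹ * Complex.I * fderiv ℝ f z Complex.I - ((τ * z.re : ℝ) : ℂ) * f z)).re :=
        integral_congr_ae (Filter.Eventually.of_forall hps)
      _ = (∫ z : ℂ, (normSq ((2:ℂ)⁻¹ * fderiv ℝ f z 1)
          + normSq ((2:ℂ)⁻¹ * Complex.I * fderiv ℝ f z Complex.I - ((τ * z.re : ℝ) : ℂ) * f z)))
          + ∫ z : ℂ, 2 * (((2:ℂ)⁻¹ * fderiv ℝ f z 1) * (starRingEnd ℂ)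
          ((2:ℂ)⁻¹ * Complex.I * fderiv ℝ f z Complex.I - ((τ * z.re : ℝ) : ℂ) * f z)).re :=
        integral_add (iA.add iD) iC
      _ = _ := by rw [integral_add iA iD]
  have hA0 : 0 ≤ ∫ z : ℂ, normSq ((2:ℂ)⁻¹ * fderiv ℝ f z 1) :=
    integral_nonneg fun z => normSq_nonneg _
  have hD0 : 0 ≤ ∫ z : ℂ, normSq ((2:ℂ)⁻¹ * Complex.I * fderiv ℝ f z Complex.I
      - ((τ * z.re : ℝ) : ℂ) * f z) :=
    integral_nonneg fun z => normSq_nonneg _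
  rw [htot, hcrossval]
  linarith

lemma dbar_mul {f g : ℂ → ℂ} (hf : ContDiff ℝ (⊤ : ℕ∞) f) (hg : ContDiff ℝ (⊤ : ℕ∞) g) (z : ℂ) :
    dbar (fun w => f w * g w) z = dbar f z * g z + f z * dbar g z := by
  simp only [dbar, smul_eq_mul,
    fderiv_mul_apply ((hf.differentiable (by simp)) z) ((hg.differentiable (by simp)) z)]
  ring

lemma re_sq_contDiff : ContDiff ℝ (⊤ : ℕ∞) (fun z : ℂ => ((z.re : ℂ)) * ((z.re : ℂ))) := by
  have hre_cd : ContDiff ℝ (⊤ : ℕ∞) (fun z : ℂ => (z.re : ℂ)) := by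
    have : (fun z : ℂ => (z.re : ℂ)) = ⇑(Complex.ofRealCLM.comp Complex.reCLM) := rfl
    rw [this]; exact (Complex.ofRealCLM.comp Complex.reCLM).contDiff
  exact hre_cd.mul hre_cd

lemma weight_contDiff (τ : ℝ) :
    ContDiff ℝ (⊤ : ℕ∞) (fun z : ℂ => Complex.exp ((τ:ℂ) * ((z.re : ℂ) * (z.re : ℂ)))) := by
  have h1 : ContDiff ℝ (⊤ : ℕ∞) (fun z : ℂ => (τ:ℂ) * ((z.re:ℂ)*(z.re:ℂ))) :=
    contDiff_const.mul re_sq_contDiff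
  exact (ContDiff.restrict_scalars (𝕜' := ℂ) ℝ Complex.contDiff_exp).comp h1

lemma weight_fderiv (τ : ℝ) (z v : ℂ) :
    fderiv ℝ (fun z : ℂ => Complex.exp ((τ:ℂ) * ((z.re : ℂ) * (z.re : ℂ)))) z v
      = Complex.exp ((τ:ℂ) * ((z.re : ℂ) * (z.re : ℂ)))
        * ((τ:ℂ) * ((v.re:ℂ) * (z.re:ℂ) + (z.re:ℂ) * (v.re:ℂ))) := by
  have hre_d : Differentiable ℝ (fun z : ℂ => (z.re : ℂ)) := by
    have : (fun z : ℂ => (z.re : ℂ)) = ⇑(Complex.ofRealCLM.comp Complex.reCLM) := rfl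
    rw [this]; exact (Complex.ofRealCLM.comp Complex.reCLM).differentiable
  have hg_cd : ContDiff ℝ (⊤ : ℕ∞) (fun z : ℂ => (τ:ℂ) * ((z.re:ℂ)*(z.re:ℂ))) :=
    contDiff_const.mul re_sq_contDiff
  have hgfd : HasFDerivAt (fun z : ℂ => (τ:ℂ) * ((z.re : ℂ) * (z.re : ℂ)))
      (fderiv ℝ (fun z : ℂ => (τ:ℂ) * ((z.re : ℂ) * (z.re : ℂ))) z) z :=
    ((hg_cd.differentiable (by simp)) z).hasFDerivAt
  have hexp : HasDerivAt Complex.exp (Complex.exp ((τ:ℂ) * ((z.re : ℂ) * (z.re : ℂ))))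
      ((τ:ℂ) * ((z.re : ℂ) * (z.re : ℂ))) := Complex.hasDerivAt_exp _
  have hcomp := (hexp.hasFDerivAt.restrictScalars ℝ).comp z hgfd
  have hh : (fun z : ℂ => Complex.exp ((τ:ℂ) * ((z.re : ℂ) * (z.re : ℂ))))
      = (Complex.exp ∘ fun z : ℂ => (τ:ℂ) * ((z.re:ℂ) * (z.re:ℂ))) := rfl
  rw [hh, hcomp.fderiv]
  simp only [ContinuousLinearMap.coe_comp', Function.comp_apply,
    ContinuousLinearMap.coe_restrictScalars', ContinuousLinearMap.smulRight_apply,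
    ContinuousLinearMap.one_apply, ContinuousLinearMap.toSpanSingleton_apply, smul_eq_mul]
  rw [fderiv_const_mul ((re_sq_contDiff.differentiable (by simp)) z) ((τ:ℂ))]
  simp only [ContinuousLinearMap.smul_apply, smul_eq_mul]
  rw [fderiv_mul_apply (hre_d z) (hre_d z)]
  simp only [fderiv_re_apply]
  ring


lemma weight_dbar (τ : ℝ) (z : ℂ) :
    dbar (fun z : ℂ => Complex.exp ((τ:ℂ) * ((z.re:ℂ) * (z.re:ℂ)))) z
      = ((τ * z.re : ℝ) : ℂ) * Complex.exp ((τ:ℂ) * ((z.re:ℂ) * (z.re:ℂ))) := by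
  simp only [dbar, smul_eq_mul, weight_fderiv, Complex.one_re, Complex.I_re]
  push_cast
  ring

lemma dbar_cont {f : ℂ → ℂ} (hf : ContDiff ℝ (⊤ : ℕ∞) f) : Continuous (fun z => dbar f z) := by
  have : (fun z => dbar f z)
      = fun z => (2:ℂ)⁻¹ * (fderiv ℝ f z 1 + Complex.I * fderiv ℝ f z Complex.I) := by
    funext z; simp [dbar, smul_eq_mul]
  rw [this]
  exact continuous_const.mul ((contDiff_fderiv_apply hf 1).continuous.add
    (continuous_const.mul (contDiff_fderiv_apply hf Complex.I).continuous))

lemma dbar_cs {f : ℂ → ℂ} (h2 : HasCompactSupport f) :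
    HasCompactSupport (fun z => dbar f z) := by
  have : (fun z => dbar f z)
      = fun z => (2:ℂ)⁻¹ * (fderiv ℝ f z 1 + Complex.I * fderiv ℝ f z Complex.I) := by
    funext z; simp [dbar, smul_eq_mul]
  rw [this]
  exact (((h2.fderiv_apply ℝ 1).add ((h2.fderiv_apply ℝ Complex.I).mul_left)).mul_left)

section Matrixy

attribute [local instance] Matrix.normedAddCommGroup Matrix.normedSpace

variable {r : ℕ}

def entryCLM (i j : Fin r) : Matrix (Fin r) (Fin r) ℂ →L[ℝ] ℂ :=
  LinearMap.mkContinuous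
    { toFun := fun M => M i j
      map_add' := fun _ _ => rfl
      map_smul' := fun _ _ => rfl } 1
    (fun M => by show ‖M i j‖ ≤ 1 * ‖M‖; simpa using M.norm_entry_le_entrywise_sup_norm (i := i) (j := j))

lemma fderiv_entry (u : ℂ → Matrix (Fin r) (Fin r) ℂ) (hu : Differentiable ℝ u)
    (z v : ℂ) (i j : Fin r) :
    fderiv ℝ (fun w => u w i j) z v = (fderiv ℝ u z v) i j := by
  have h := ((entryCLM i j).hasFDerivAt (x := u z)).comp z (hu z).hasFDerivAt
  have hh : (fun w => u w i j) = (⇑(entryCLM i j) ∘ u) := rfl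
  rw [hh, h.fderiv]; rfl

lemma dbar_entry (u : ℂ → Matrix (Fin r) (Fin r) ℂ) (hu : Differentiable ℝ u)
    (z : ℂ) (i j : Fin r) :
    dbar (fun w => u w i j) z = dbar u z i j := by
  simp only [dbar, fderiv_entry u hu, Matrix.smul_apply, Matrix.add_apply, smul_eq_mul]; rfl

lemma entry_contDiff (u : ℂ → Matrix (Fin r) (Fin r) ℂ) (hu : ContDiff ℝ (⊤ : ℕ∞) u) (i j : Fin r) :
    ContDiff ℝ (⊤ : ℕ∞) (fun w => u w i j) := by
  have hh : (fun w => u w i j) = (⇑(entryCLM i j) ∘ u) := rfl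
  rw [hh]; exact (entryCLM i j).contDiff.comp hu

lemma entry_cs (u : ℂ → Matrix (Fin r) (Fin r) ℂ) (hu : HasCompactSupport u) (i j : Fin r) :
    HasCompactSupport (fun w => u w i j) :=
  hu.comp_left (g := fun M : Matrix (Fin r) (Fin r) ℂ => M i j) rfl

end Matrixy

attribute [local instance] Matrix.normedAddCommGroup Matrix.normedSpace

/-- **Uniqueness for the ∂̄-intertwining equation (unique continuation):**
a smooth solution of `∂̄u + au − ub = 0` on `ℂ` vanishing outside a compact
set vanishes identically. -/
theorem dbar_intertwining_unique_continuation
    {r : ℕ} (hr : 1 ≤ r)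
    (a b u : ℂ → Matrix (Fin r) (Fin r) ℂ)
    (ha : ContDiff ℝ (⊤ : ℕ∞) a) (hasupp : HasCompactSupport a)
    (hb : ContDiff ℝ (⊤ : ℕ∞) b) (hbsupp : HasCompactSupport b)
    (hu : ContDiff ℝ (⊤ : ℕ∞) u)
    (heq : ∀ z : ℂ, dbar u z + a z * u z - u z * b z = 0)
    (K : Set ℂ) (hK : IsCompact K)
    (hvanish : ∀ z ∉ K, u z = 0) :
    ∀ z : ℂ, u z = 0 := by
  classical
  have husupp : HasCompactSupport u := HasCompactSupport.intro hK hvanish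
  have hud : Differentiable ℝ u := hu.differentiable (by simp)
  obtain ⟨Ca, hCa⟩ := hasupp.exists_bound_of_continuous ha.continuous
  obtain ⟨Cb, hCb⟩ := hbsupp.exists_bound_of_continuous hb.continuous
  set C : ℝ := max Ca Cb with hCdef
  have hC0 : 0 ≤ C := le_trans (norm_nonneg (a 0)) ((hCa 0).trans (le_max_left _ _))
  have hae : ∀ (z : ℂ) (i j : Fin r), ‖a z i j‖ ≤ C := fun z i j =>
    ((a z).norm_entry_le_entrywise_sup_norm).trans ((hCa z).trans (le_max_left _ _))
  have hbe : ∀ (z : ℂ) (i j : Fin r), ‖b z i j‖ ≤ C := fun z i j =>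
    ((b z).norm_entry_le_entrywise_sup_norm).trans ((hCb z).trans (le_max_right _ _))
  set S : ℂ → ℝ := fun z => ∑ p : Fin r × Fin r, Complex.normSq (u z p.1 p.2) with hSdef
  have hS0 : ∀ z, 0 ≤ S z := fun z => Finset.sum_nonneg fun p _ => normSq_nonneg _
  have hSc : Continuous S := by
    apply continuous_finset_sum
    intro p _
    exact Complex.continuous_normSq.comp (entry_contDiff u hu p.1 p.2).continuous
  have hSentry : ∀ (z : ℂ) (i j : Fin r), Complex.normSq (u z i j) ≤ S z := by
    intro z i j
    exact Finset.single_le_sum (f := fun p : Fin r × Fin r => Complex.normSq (u z p.1 p.2))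
      (fun p _ => normSq_nonneg _) (Finset.mem_univ (i, j))
  have huabs : ∀ (z : ℂ) (i j : Fin r), ‖u z i j‖ ≤ Real.sqrt (S z) := by
    intro z i j
    rw [show ‖u z i j‖ = Real.sqrt (Complex.normSq (u z i j)) from by
      rw [Complex.norm_def]]
    exact Real.sqrt_le_sqrt (hSentry z i j)
  have heq' : ∀ z, dbar u z = u z * b z - a z * u z := by
    intro z
    have h := heq z
    rw [sub_eq_zero] at h
    exact eq_sub_of_add_eq h
  have heqe : ∀ (z : ℂ) (i j : Fin r), dbar (fun w => u w i j) z
      = (∑ k, u z i k * b z k j) - ∑ k, a z i k * u z k j := by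
    intro z i j
    rw [dbar_entry u hud z i j, heq' z]
    simp [Matrix.sub_apply, Matrix.mul_apply]
  have hdabs : ∀ (z : ℂ) (i j : Fin r),
      ‖dbar (fun w => u w i j) z‖ ≤ 2 * r * C * Real.sqrt (S z) := by
    intro z i j
    rw [heqe z i j]
    have h1 : ‖∑ k, u z i k * b z k j‖ ≤ r * (Real.sqrt (S z) * C) := by
      calc ‖∑ k, u z i k * b z k j‖ ≤ ∑ k, ‖u z i k * b z k j‖ := norm_sum_le _ _
        _ ≤ ∑ _k : Fin r, Real.sqrt (S z) * C := by
            apply Finset.sum_le_sum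
            intro k _
            rw [norm_mul]
            exact mul_le_mul (huabs z i k) (hbe z k j) (norm_nonneg _) (Real.sqrt_nonneg _)
        _ = r * (Real.sqrt (S z) * C) := by
            rw [Finset.sum_const, Finset.card_univ, Fintype.card_fin, nsmul_eq_mul]
    have h2 : ‖∑ k, a z i k * u z k j‖ ≤ r * (C * Real.sqrt (S z)) := by
      calc ‖∑ k, a z i k * u z k j‖ ≤ ∑ k, ‖a z i k * u z k j‖ := norm_sum_le _ _
        _ ≤ ∑ _k : Fin r, C * Real.sqrt (S z) := by
            apply Finset.sum_le_sum
            intro k _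
            rw [norm_mul]
            exact mul_le_mul (hae z i k) (huabs z k j) (norm_nonneg _) hC0
        _ = r * (C * Real.sqrt (S z)) := by
            rw [Finset.sum_const, Finset.card_univ, Fintype.card_fin, nsmul_eq_mul]
    calc ‖(∑ k, u z i k * b z k j) - ∑ k, a z i k * u z k j‖
        ≤ ‖∑ k, u z i k * b z k j‖ + ‖∑ k, a z i k * u z k j‖ := norm_sub_le _ _
      _ ≤ r * (Real.sqrt (S z) * C) + r * (C * Real.sqrt (S z)) := add_le_add h1 h2
      _ = 2 * r * C * Real.sqrt (S z) := by ring
  set M2 : ℝ := (r : ℝ)^2 * (2 * r * C)^2 with hM2def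
  have hdsq : ∀ (z : ℂ) (i j : Fin r),
      Complex.normSq (dbar (fun w => u w i j) z) ≤ (2 * r * C)^2 * S z := by
    intro z i j
    have h := hdabs z i j
    calc Complex.normSq (dbar (fun w => u w i j) z)
        = ‖dbar (fun w => u w i j) z‖^2 := Complex.normSq_eq_norm_sq _
      _ ≤ (2 * r * C * Real.sqrt (S z))^2 := by
          apply pow_le_pow_left₀ (norm_nonneg _) h
      _ = (2 * r * C)^2 * (Real.sqrt (S z))^2 := by ring
      _ = (2 * r * C)^2 * S z := by rw [Real.sq_sqrt (hS0 z)]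
  have hsumb : ∀ z : ℂ, (∑ p : Fin r × Fin r,
      Complex.normSq (dbar (fun w => u w p.1 p.2) z)) ≤ M2 * S z := by
    intro z
    calc (∑ p : Fin r × Fin r, Complex.normSq (dbar (fun w => u w p.1 p.2) z))
        ≤ ∑ _p : Fin r × Fin r, (2 * r * C)^2 * S z :=
          Finset.sum_le_sum fun p _ => hdsq z p.1 p.2
      _ = (r * r : ℕ) * ((2 * r * C)^2 * S z) := by
          rw [Finset.sum_const, Finset.card_univ, Fintype.card_prod, Fintype.card_fin,
            nsmul_eq_mul]
      _ = M2 * S z := by push_cast [hM2def]; ring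
  set τ : ℝ := 2 * M2 + 2 with hτdef
  set E : ℂ → ℂ := fun z => Complex.exp ((τ:ℂ) * ((z.re:ℂ) * (z.re:ℂ))) with hEdef
  set W : ℂ → ℝ := fun z => Complex.normSq (E z) with hWdef
  have hW0 : ∀ z, 0 < W z := fun z => Complex.normSq_pos.mpr (Complex.exp_ne_zero _)
  have hWc : Continuous W := Complex.continuous_normSq.comp (weight_contDiff τ).continuous
  have hgint : ∀ p : Fin r × Fin r,
      Integrable (fun z : ℂ => W z * Complex.normSq (u z p.1 p.2)) := by
    intro p
    apply Continuous.integrable_of_hasCompactSupport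
    · exact hWc.mul (Complex.continuous_normSq.comp (entry_contDiff u hu p.1 p.2).continuous)
    · exact ((entry_cs u husupp p.1 p.2).comp_left (g := Complex.normSq) (by simp)).mul_left
  have hhint : ∀ p : Fin r × Fin r,
      Integrable (fun z : ℂ => W z * Complex.normSq (dbar (fun w => u w p.1 p.2) z)) := by
    intro p
    apply Continuous.integrable_of_hasCompactSupport
    · exact hWc.mul (Complex.continuous_normSq.comp (dbar_cont (entry_contDiff u hu p.1 p.2)))
    · exact ((dbar_cs (entry_cs u husupp p.1 p.2)).comp_left
        (g := Complex.normSq) (by simp)).mul_left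
  have hper : ∀ p : Fin r × Fin r,
      (τ/2) * ∫ z : ℂ, W z * Complex.normSq (u z p.1 p.2)
        ≤ ∫ z : ℂ, W z * Complex.normSq (dbar (fun w => u w p.1 p.2) z) := by
    intro p
    have hfcd : ContDiff ℝ (⊤ : ℕ∞) (fun z => E z * u z p.1 p.2) :=
      (weight_contDiff τ).mul (entry_contDiff u hu p.1 p.2)
    have hfcs : HasCompactSupport (fun z => E z * u z p.1 p.2) :=
      (entry_cs u husupp p.1 p.2).mul_left
    have hcar := carleman τ (fun z => E z * u z p.1 p.2) hfcd hfcs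
    have hR : ∀ z : ℂ, dbar (fun w => E w * u w p.1 p.2) z
        - ((τ * z.re : ℝ):ℂ) * (E z * u z p.1 p.2)
        = E z * dbar (fun w => u w p.1 p.2) z := by
      intro z
      rw [dbar_mul (weight_contDiff τ) (entry_contDiff u hu p.1 p.2) z, weight_dbar τ z]
      ring
    calc (τ/2) * ∫ z : ℂ, W z * Complex.normSq (u z p.1 p.2)
        = (τ/2) * ∫ z : ℂ, Complex.normSq (E z * u z p.1 p.2) := by
          congr 1
          exact integral_congr_ae (Filter.Eventually.of_forall fun z => by
            simp only [Complex.normSq_mul, hWdef])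
      _ ≤ ∫ z : ℂ, Complex.normSq (dbar (fun w => E w * u w p.1 p.2) z
          - ((τ * z.re : ℝ):ℂ) * (E z * u z p.1 p.2)) := hcar
      _ = ∫ z : ℂ, W z * Complex.normSq (dbar (fun w => u w p.1 p.2) z) :=
          integral_congr_ae (Filter.Eventually.of_forall fun z => by
            simp only [hR z, Complex.normSq_mul, hWdef])
  have hIWS_int : Integrable (fun z : ℂ => W z * S z) := by
    have hh : (fun z : ℂ => W z * S z)
        = fun z : ℂ => ∑ p : Fin r × Fin r, (W z * Complex.normSq (u z p.1 p.2)) :=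
      funext fun z => by simp only [hSdef, Finset.mul_sum]
    rw [hh]
    exact integrable_finset_sum _ fun p _ => hgint p
  have hIWS_eq : ∫ z : ℂ, W z * S z
      = ∑ p : Fin r × Fin r, ∫ z : ℂ, W z * Complex.normSq (u z p.1 p.2) := by
    rw [← integral_finset_sum _ fun p _ => hgint p]
    exact integral_congr_ae (Filter.Eventually.of_forall fun z => by
      simp only [hSdef, Finset.mul_sum])
  have hstep : (τ/2) * ∫ z : ℂ, W z * S z ≤ M2 * ∫ z : ℂ, W z * S z := by
    calc (τ/2) * ∫ z : ℂ, W z * S z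
        = ∑ p : Fin r × Fin r, (τ/2) * ∫ z : ℂ, W z * Complex.normSq (u z p.1 p.2) := by
          rw [hIWS_eq, Finset.mul_sum]
      _ ≤ ∑ p : Fin r × Fin r, ∫ z : ℂ, W z * Complex.normSq (dbar (fun w => u w p.1 p.2) z) :=
          Finset.sum_le_sum fun p _ => hper p
      _ = ∫ z : ℂ, ∑ p : Fin r × Fin r, W z * Complex.normSq (dbar (fun w => u w p.1 p.2) z) :=
          (integral_finset_sum _ fun p _ => hhint p).symm
      _ ≤ ∫ z : ℂ, M2 * (W z * S z) := by
          apply integral_mono (integrable_finset_sum _ fun p _ => hhint p)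
            (hIWS_int.const_mul M2)
          intro z
          calc (∑ p : Fin r × Fin r, W z * Complex.normSq (dbar (fun w => u w p.1 p.2) z))
              = W z * ∑ p : Fin r × Fin r, Complex.normSq (dbar (fun w => u w p.1 p.2) z) := by
                rw [Finset.mul_sum]
            _ ≤ W z * (M2 * S z) := mul_le_mul_of_nonneg_left (hsumb z) (hW0 z).le
            _ = M2 * (W z * S z) := by ring
      _ = M2 * ∫ z : ℂ, W z * S z := MeasureTheory.integral_const_mul M2 _
  have hIWS0 : 0 ≤ ∫ z : ℂ, W z * S z :=
    integral_nonneg fun z => mul_nonneg (hW0 z).le (hS0 z)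
  have hIWS_zero : ∫ z : ℂ, W z * S z = 0 := by
    have hτhalf : τ/2 = M2 + 1 := by rw [hτdef]; ring
    nlinarith [hstep, hIWS0]
  have hae0 : (fun z : ℂ => W z * S z) =ᵐ[volume] 0 :=
    (integral_eq_zero_iff_of_nonneg (fun z => mul_nonneg (hW0 z).le (hS0 z)) hIWS_int).mp
      hIWS_zero
  have heq0 : (fun z : ℂ => W z * S z) = 0 :=
    ((hWc.mul hSc).ae_eq_iff_eq volume continuous_zero).mp hae0
  intro z
  have hz : W z * S z = 0 := congrFun heq0 z
  have hSz : S z = 0 := by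
    rcases mul_eq_zero.mp hz with h | h
    · exact absurd h (hW0 z).ne'
    · exact h
  apply Matrix.ext
  intro i j
  have hzero := (Finset.sum_eq_zero_iff_of_nonneg
    (fun p _ => normSq_nonneg (u z p.1 p.2))).mp hSz (i, j) (Finset.mem_univ _)
  simpa using Complex.normSq_eq_zero.mp hzero
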